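/- Let L_G and L_H be real symmetric positive semidefinite matrices indexed by a finite type V, and let ε ∈ (0,1) be such that for every real vector x, (1−ε)·xᵀL_G x ≤ xᵀL_H x ≤ (1+ε)·xᵀL_G x. Then for all s, t ∈ V and all vectors y, z with L_G·y = 1_s − 1_t and L_H·z = 1_s − 1_t, one has (1/(1+ε))·(y_s − y_t) ≤ z_s − z_t ≤ (1/(1−ε))·(y_s − y_t). In other words, every (1±ε)-spectral sparsifier of a graph is a 1/(1±ε)-resistance sparsifier: it preserves all pairwise effective resistances up to a factor 1/(1±ε). -/

import Mathlib

/-!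
If `L y = b`, then `y` maximises `x ↦ 2 ⟨x, b⟩ - xᵀ L x` for positive semidefinite `L`, with maximum
`⟨y, b⟩`; for `b = 1_s - 1_t` this maximum is the effective resistance `R = y_s - y_t`. Testing the
maximisation problem of one matrix at a rescaled maximiser of the other, and comparing quadratic
forms by spectral approximation, gives `(1 - ε) R_H ≤ R_G` and `R_G ≤ (1 + ε) R_H`.
-/

open Matrix

theorem Matrix.IsSymm.dotProduct_mulVec_comm {n α : Type*} [Fintype n] [CommSemiring α]
    {A : Matrix n n α} (hA : A.IsSymm) (v w : n → α) :
    v ⬝ᵥ A *ᵥ w = w ⬝ᵥ A *ᵥ v := by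
  rw [dotProduct_mulVec, ← mulVec_transpose, hA.eq, dotProduct_comm]

namespace Matrix.PosSemidef

variable {n : Type*} [Fintype n] {A : Matrix n n ℝ}

theorem two_mul_dotProduct_sub_le_of_mulVec_eq (hA : A.PosSemidef) {w b : n → ℝ}
    (hw : A *ᵥ w = b) (x : n → ℝ) :
    2 * (x ⬝ᵥ b) - x ⬝ᵥ A *ᵥ x ≤ w ⬝ᵥ b := by
  have hnonneg : 0 ≤ (w - x) ⬝ᵥ A *ᵥ (w - x) := by
    simpa using hA.dotProduct_mulVec_nonneg (w - x)
  have hsymm : w ⬝ᵥ A *ᵥ x = x ⬝ᵥ A *ᵥ w :=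
    (isHermitian_iff_isSymm.mp hA.isHermitian).dotProduct_mulVec_comm w x
  have hexpand : (w - x) ⬝ᵥ A *ᵥ (w - x) = w ⬝ᵥ b - 2 * (x ⬝ᵥ b) + x ⬝ᵥ A *ᵥ x := by
    rw [mulVec_sub, sub_dotProduct, dotProduct_sub, dotProduct_sub, hsymm, hw]
    ring
  linarith

theorem mul_dotProduct_le_of_mul_quadForm_le (hA : A.PosSemidef) {B : Matrix n n ℝ} {c : ℝ}
    (hc : 0 ≤ c) (hAB : ∀ x : n → ℝ, c * (x ⬝ᵥ A *ᵥ x) ≤ x ⬝ᵥ B *ᵥ x) {y z b : n → ℝ}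
    (hy : B *ᵥ y = b) (hz : A *ᵥ z = b) :
    c * (y ⬝ᵥ b) ≤ z ⬝ᵥ b := by
  have htest := hA.two_mul_dotProduct_sub_le_of_mulVec_eq hz (c • y)
  have hquad : c * (y ⬝ᵥ A *ᵥ y) ≤ y ⬝ᵥ b := hy ▸ hAB y
  have hscale : (c • y) ⬝ᵥ A *ᵥ (c • y) = c * (c * (y ⬝ᵥ A *ᵥ y)) := by
    rw [mulVec_smul, dotProduct_smul, smul_dotProduct, smul_eq_mul, smul_eq_mul]
  rw [smul_dotProduct, smul_eq_mul, hscale] at htest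
  linarith [mul_le_mul_of_nonneg_left hquad hc]

end Matrix.PosSemidef

theorem dotProduct_single_sub_single {n : Type*} [Fintype n] [DecidableEq n] (v : n → ℝ)
    (s t : n) : v ⬝ᵥ (Pi.single s 1 - Pi.single t 1) = v s - v t := by
  rw [dotProduct_sub, dotProduct_single, dotProduct_single, mul_one, mul_one]

/-- Every `(1±ε)`-spectral sparsifier is a `1/(1±ε)`-resistance sparsifier: if
`(1−ε)·xᵀL_G x ≤ xᵀL_H x ≤ (1+ε)·xᵀL_G x` for all `x`, then for all `s, t` and all
solutions `y, z` of `L_G·y = 1_s − 1_t` and `L_H·z = 1_s − 1_t`, we have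
`(1/(1+ε))·(y_s − y_t) ≤ z_s − z_t ≤ (1/(1−ε))·(y_s − y_t)`. -/
theorem spectral_sparsifier_is_resistance_sparsifier
    {V : Type*} [Fintype V] [DecidableEq V]
    (LG LH : Matrix V V ℝ) (hLG : LG.PosSemidef) (hLH : LH.PosSemidef)
    (ε : ℝ) (hε0 : 0 < ε) (hε1 : ε < 1)
    (happrox : ∀ x : V → ℝ,
      (1 - ε) * (x ⬝ᵥ LG *ᵥ x) ≤ x ⬝ᵥ LH *ᵥ x ∧
        x ⬝ᵥ LH *ᵥ x ≤ (1 + ε) * (x ⬝ᵥ LG *ᵥ x)) :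
    ∀ (s t : V) (y z : V → ℝ),
      LG *ᵥ y = (Pi.single s 1 - Pi.single t 1) →
      LH *ᵥ z = (Pi.single s 1 - Pi.single t 1) →
      (1 / (1 + ε)) * (y s - y t) ≤ z s - z t ∧
        z s - z t ≤ (1 / (1 - ε)) * (y s - y t) := by
  intro s t y z hy hz
  have hone_add_pos : 0 < 1 + ε := by linarith
  have hone_sub_pos : 0 < 1 - ε := by linarith
  have hH_le_G : ∀ x : V → ℝ, 1 / (1 + ε) * (x ⬝ᵥ LH *ᵥ x) ≤ x ⬝ᵥ LG *ᵥ x := fun x => by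
    rw [one_div_mul_eq_div, div_le_iff₀' hone_add_pos]
    exact (happrox x).2
  have hlower := hLH.mul_dotProduct_le_of_mul_quadForm_le (by positivity) hH_le_G hy hz
  have hupper := hLG.mul_dotProduct_le_of_mul_quadForm_le hone_sub_pos.le (fun x => (happrox x).1) hz hy
  simp only [dotProduct_single_sub_single] at hlower hupper
  refine ⟨hlower, ?_⟩
  rwa [one_div_mul_eq_div, le_div_iff₀' hone_sub_pos]
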